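/- arXiv:2410.01453 — 2 statements merged into one kernel-verified Lean document; each statement's English description precedes it below -/
import Mathlib

section
/- Let γ : [0,1] → ℝ² be an injective Lipschitz curve with image C, let s > 1 and λ ≥ 1, and let μ be a probability measure supported on C. Then the length of the curve satisfies length(γ) ≥ λ^s / E_s(μ) − 2^s, where E_s(μ) := λ^s ∬_{C×C} μ(dx)μ(dy)/max(|x−y|^s,1). -/
/-!
Cutting `[0, 1]` where the arc-length function crosses an integer splits the curve into at most
`⌊length⌋₊ + 1` pieces of diameter at most `1`, on each of which the kernel
`1 / max (|x - y| ^ s) 1` equals `1` (as `s ≥ 0`). After making the pieces disjoint, the double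
integral is at least `∑ μ(Bᵢ)²`, which by Cauchy–Schwarz is at least `1 / (⌊length⌋₊ + 1)`.
Hence `λ^s / E_s(μ) ≤ length + 1 ≤ length + 2^s`.
-/

open MeasureTheory Set
open scoped Function

theorem measureReal_univ_sq_le_card_mul_integral_of_cover {X : Type*} [MeasurableSpace X]
    (ν : Measure X) [IsFiniteMeasure ν] {n : ℕ} {K : Fin n → Set X} (hK : ∀ i, MeasurableSet (K i))
    (hcover : ∀ᵐ x ∂ν, x ∈ ⋃ i, K i) {k : X × X → ℝ} (hk : Integrable k (ν.prod ν))
    (hk0 : 0 ≤ k) (hkK : ∀ i, ∀ x ∈ K i, ∀ y ∈ K i, 1 ≤ k (x, y)) :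
    ν.real univ ^ 2 ≤ n * ∫ p, k p ∂(ν.prod ν) := by
  set D := disjointed K
  have hD_meas (i : Fin n) : MeasurableSet (D i) :=
    disjointedRec (fun _ _ ht => ht.diff (hK _)) (hK i)
  have hD_disj : Pairwise (Disjoint on fun i => D i ×ˢ D i) := fun i j hij =>
    disjoint_prod.2 (Or.inl (disjoint_disjointed K hij))
  have hD_prod_meas (i : Fin n) : MeasurableSet (D i ×ˢ D i) := (hD_meas i).prod (hD_meas i)
  have hk_indicator : (⋃ i, D i ×ˢ D i).indicator 1 ≤ k := by
    intro p
    by_cases hp : p ∈ ⋃ i, D i ×ˢ D i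
    · obtain ⟨i, hx, hy⟩ := mem_iUnion.1 hp
      simpa [hp] using hkK i p.1 (disjointed_subset K i hx) p.2 (disjointed_subset K i hy)
    · simpa [hp] using hk0 p
  calc ν.real univ ^ 2 = (∑ i, ν.real (D i)) ^ 2 := by
        rw [← measureReal_iUnion_fintype (disjoint_disjointed K) hD_meas, iUnion_disjointed,
          measureReal_congr (ae_eq_univ.2 hcover : (⋃ i, K i) =ᵐ[ν] univ)]
    _ ≤ n * ∑ i, ν.real (D i) ^ 2 := by
        simpa using sq_sum_le_card_mul_sum_sq (s := Finset.univ) (f := fun i => ν.real (D i))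
    _ = n * (ν.prod ν).real (⋃ i, D i ×ˢ D i) := by
        rw [measureReal_iUnion_fintype hD_disj hD_prod_meas]
        simp [measureReal_prod_prod, sq]
    _ ≤ n * ∫ p, k p ∂(ν.prod ν) := by
        rw [← integral_indicator_one (MeasurableSet.iUnion hD_prod_meas)]
        gcongr
        exact (integrable_const 1).indicator (MeasurableSet.iUnion hD_prod_meas)

section Variation

variable {α E : Type*} [LinearOrder α] [PseudoMetricSpace E] {f : α → E} {s : Set α}

theorem BoundedVariationOn.dist_le_variation_Iic_sub (hf : BoundedVariationOn f s) {u w : α}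
    (hu : u ∈ s) (hw : w ∈ s) (huw : u ≤ w) :
    dist (f u) (f w) ≤
      (eVariationOn f (s ∩ Iic w)).toReal - (eVariationOn f (s ∩ Iic u)).toReal := by
  have hsplit : eVariationOn f (s ∩ Iic u) + eVariationOn f (s ∩ Icc u w) ≤
      eVariationOn f (s ∩ Iic w) :=
    (eVariationOn.add_le_union f fun x hx y hy => hx.2.trans hy.2.1).trans
      (eVariationOn.mono f (union_subset (inter_subset_inter_right s (Iic_subset_Iic.2 huw))
        (inter_subset_inter_right s Icc_subset_Iic_self)))
  have hedist : edist (f u) (f w) ≤ eVariationOn f (s ∩ Icc u w) :=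
    eVariationOn.edist_le f ⟨hu, left_mem_Icc.2 huw⟩ ⟨hw, right_mem_Icc.2 huw⟩
  have hfin (t : Set α) (ht : t ⊆ s) : eVariationOn f t ≠ ⊤ :=
    ne_top_of_le_ne_top hf (eVariationOn.mono f ht)
  rw [le_sub_iff_add_le', dist_edist, ← ENNReal.toReal_add (hfin _ inter_subset_left)
    (edist_ne_top _ _)]
  exact ENNReal.toReal_mono (hfin _ inter_subset_left) (le_trans (by gcongr) hsplit)

theorem BoundedVariationOn.exists_isClosed_cover_ediam_le_one (hf : BoundedVariationOn f s) :
    ∃ K : Fin (⌊(eVariationOn f s).toReal⌋₊ + 1) → Set E,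
      (∀ i, IsClosed (K i)) ∧ f '' s ⊆ ⋃ i, K i ∧ ∀ i, Metric.ediam (K i) ≤ 1 := by
  set v : α → ℝ := fun u => (eVariationOn f (s ∩ Iic u)).toReal
  have hv_le (u : α) : v u ≤ (eVariationOn f s).toReal :=
    ENNReal.toReal_mono hf (eVariationOn.mono f inter_subset_left)
  have hpiece (i : ℕ) : Metric.ediam (f '' {u ∈ s | ⌊v u⌋₊ = i}) ≤ 1 := by
    have hordered : ∀ u ∈ {u ∈ s | ⌊v u⌋₊ = i}, ∀ w ∈ {u ∈ s | ⌊v u⌋₊ = i}, u ≤ w →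
        dist (f u) (f w) ≤ 1 := by
      rintro u ⟨hu, hui⟩ w ⟨hw, hwi⟩ huw
      rw [Nat.floor_eq_iff ENNReal.toReal_nonneg] at hui hwi
      linarith [hf.dist_le_variation_Iic_sub hu hw huw]
    refine Metric.ediam_image_le_iff.2 fun u hu w hw => ?_
    rw [← ENNReal.ofReal_one, edist_le_ofReal zero_le_one]
    rcases le_total u w with huw | hwu
    · exact hordered u hu w hw huw
    · rw [dist_comm]
      exact hordered w hw u hu hwu
  refine ⟨fun i => closure (f '' {u ∈ s | ⌊v u⌋₊ = i}), fun i => isClosed_closure, ?_,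
    fun i => by rw [Metric.ediam_closure]; exact hpiece i⟩
  rintro _ ⟨u, hu, rfl⟩
  refine mem_iUnion.2 ⟨⟨⌊v u⌋₊, Nat.lt_succ_of_le (Nat.floor_mono (hv_le u))⟩,
    subset_closure ⟨u, ⟨hu, rfl⟩, rfl⟩⟩

end Variation

section Kernel

variable {X : Type*} [PseudoMetricSpace X] {s : ℝ}

theorem one_le_one_div_max_dist_rpow_one {K : Set X} (hK : Metric.ediam K ≤ 1) (hs : 0 ≤ s)
    {x y : X} (hx : x ∈ K) (hy : y ∈ K) : 1 ≤ 1 / max (dist x y ^ s) 1 := by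
  have hxy : dist x y ≤ 1 := by
    rw [← edist_le_ofReal zero_le_one, ENNReal.ofReal_one]
    exact Metric.edist_le_of_ediam_le hx hy hK
  rw [max_eq_right (Real.rpow_le_one dist_nonneg hxy hs), div_one]

theorem integrable_one_div_max_dist_rpow_one [MeasurableSpace X] [OpensMeasurableSpace X]
    [SecondCountableTopology X] (ν : Measure X) [IsFiniteMeasure ν] (hs : 0 ≤ s) :
    Integrable (fun p : X × X => 1 / max (dist p.1 p.2 ^ s) 1) (ν.prod ν) := by
  have hden_pos (p : X × X) : 0 < max (dist p.1 p.2 ^ s) 1 := by positivity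
  have hcont : Continuous fun p : X × X => 1 / max (dist p.1 p.2 ^ s) 1 :=
    continuous_const.div (((continuous_fst.dist continuous_snd).rpow_const
      fun _ => Or.inr hs).max continuous_const) fun p => (hden_pos p).ne'
  refine Integrable.of_bound hcont.aestronglyMeasurable 1 (ae_of_all _ fun p => ?_)
  rw [Real.norm_of_nonneg (by positivity), div_le_one (hden_pos p)]
  exact le_max_right _ _

end Kernel

theorem length_ge_energy_bound_general (γ : ℝ → EuclideanSpace ℝ (Fin 2)) (Kγ : NNReal)
    (hlip : LipschitzOnWith Kγ γ (Set.Icc 0 1))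
    (s lam : ℝ) (hs : 1 < s) (hlam : 1 ≤ lam)
    (μ : Measure (EuclideanSpace ℝ (Fin 2)))
    (hsupp : μ (γ '' Set.Icc 0 1) = 1) :
    lam ^ s / (lam ^ s * ∫ x in γ '' Set.Icc 0 1, ∫ y in γ '' Set.Icc 0 1,
        1 / max (dist x y ^ s) 1 ∂μ ∂μ) - 2 ^ s
      ≤ (eVariationOn γ (Set.Icc 0 1)).toReal := by
  set C := γ '' Set.Icc 0 1
  set L := (eVariationOn γ (Set.Icc 0 1)).toReal
  have hs0 : 0 ≤ s := by linarith
  have hbv : BoundedVariationOn γ (Set.Icc 0 1) :=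
    hlip.comp_boundedVariationOn (mapsTo_id _) (BoundedVariationOn.id_Icc 0 1)
  obtain ⟨K, hK_closed, hK_cover, hK_diam⟩ := hbv.exists_isClosed_cover_ediam_le_one
  have hK_meas (i) : MeasurableSet (K i) := (hK_closed i).measurableSet
  have : IsFiniteMeasure (μ.restrict C) := isFiniteMeasure_restrict.2 (by simp [hsupp])
  have hcover_ae : ∀ᵐ x ∂μ.restrict C, x ∈ ⋃ i, K i :=
    (ae_restrict_mem (MeasurableSet.iUnion hK_meas)).filter_mono
      (ae_mono (Measure.restrict_mono hK_cover le_rfl))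
  have hI : 1 ≤ (⌊L⌋₊ + 1) * ∫ x in C, ∫ y in C, 1 / max (dist x y ^ s) 1 ∂μ ∂μ := by
    have hk := integrable_one_div_max_dist_rpow_one (μ.restrict C) hs0
    have := measureReal_univ_sq_le_card_mul_integral_of_cover (μ.restrict C) hK_meas hcover_ae hk
      (fun p => by positivity) fun i x hx y hy =>
        one_le_one_div_max_dist_rpow_one (hK_diam i) hs0 hx hy
    rw [measureReal_restrict_apply_univ, measureReal_def, hsupp, integral_prod _ hk] at this
    simpa [L] using this
  set I := ∫ x in C, ∫ y in C, 1 / max (dist x y ^ s) 1 ∂μ ∂μ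
  have hI_pos : 0 < I := pos_of_mul_pos_right (zero_lt_one.trans_le hI) (by positivity)
  have hlam_pos : 0 < lam ^ s := Real.rpow_pos_of_pos (by linarith) s
  calc lam ^ s / (lam ^ s * I) - 2 ^ s = 1 / I - 2 ^ s := by
        rw [div_mul_eq_div_div, div_self hlam_pos.ne']
    _ ≤ (⌊L⌋₊ + 1) - 1 := by
        gcongr
        · rwa [div_le_iff₀ hI_pos]
        · exact Real.one_le_rpow one_le_two hs0
    _ ≤ L := by linarith [Nat.floor_le (ENNReal.toReal_nonneg : 0 ≤ L)]

/-- For an injective Lipschitz curve `γ : [0,1] → ℝ²` with image `C`, `s > 1`, `λ ≥ 1`,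
and a probability measure `μ` supported on `C`, the length of the curve satisfies
`length(γ) ≥ λ^s / E_s(μ) - 2^s`, where
`E_s(μ) = λ^s ∬_{C×C} μ(dx)μ(dy)/max(|x-y|^s,1)`.
The length is the total variation of `γ` on `[0,1]`. -/
theorem length_ge_energy_bound (γ : ℝ → EuclideanSpace ℝ (Fin 2)) (Kγ : NNReal)
    (hlip : LipschitzOnWith Kγ γ (Set.Icc 0 1))
    (hinj : Set.InjOn γ (Set.Icc 0 1))
    (s lam : ℝ) (hs : 1 < s) (hlam : 1 ≤ lam)
    (μ : Measure (EuclideanSpace ℝ (Fin 2))) [IsProbabilityMeasure μ]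
    (hsupp : μ (γ '' Set.Icc 0 1) = 1) :
    lam ^ s / (lam ^ s * ∫ x in γ '' Set.Icc 0 1, ∫ y in γ '' Set.Icc 0 1,
        1 / max (dist x y ^ s) 1 ∂μ ∂μ) - 2 ^ s
      ≤ (eVariationOn γ (Set.Icc 0 1)).toReal :=
  length_ge_energy_bound_general γ Kγ hlip s lam hs hlam μ hsupp
end

section
/- Let s > 1 and let C be a subset of ℝ² which is the image of an injective Lipschitz curve of diameter at least λ ≥ 1. For a probability measure μ supported on C let E_s(μ) := λ^s ∬_{C×C} μ(dx)μ(dy)/max(|x−y|^s,1), and suppose some probability measure μ₀ on C satisfies E_s(μ₀) ≤ K for some constant K > 0. Then length(C) ≥ λ^s/K − 2^s. -/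
open MeasureTheory

set_option maxHeartbeats 1000000 in
/-- If `C` is the image of an injective Lipschitz curve of diameter at least `λ ≥ 1`
and some probability measure `μ₀` on `C` has energy `E_s(μ₀) ≤ K`, then
`length(C) ≥ λ^s/K - 2^s`. -/
theorem length_lower_bound_from_energy (γ : ℝ → EuclideanSpace ℝ (Fin 2)) (Kγ : NNReal)
    (hlip : LipschitzOnWith Kγ γ (Set.Icc 0 1))
    (hinj : Set.InjOn γ (Set.Icc 0 1))
    (C : Set (EuclideanSpace ℝ (Fin 2))) (hC : C = γ '' Set.Icc 0 1)
    (s lam K : ℝ) (hs : 1 < s) (hlam : 1 ≤ lam) (hK : 0 < K)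
    (hdiam : lam ≤ Metric.diam C)
    (μ₀ : Measure (EuclideanSpace ℝ (Fin 2))) [IsProbabilityMeasure μ₀]
    (hsupp : μ₀ C = 1)
    (hE : lam ^ s * ∫ x in C, ∫ y in C, 1 / max (dist x y ^ s) 1 ∂μ₀ ∂μ₀ ≤ K) :
    lam ^ s / K - 2 ^ s ≤ (eVariationOn γ (Set.Icc 0 1)).toReal := by
  classical
  have hs0 : (0:ℝ) ≤ s := le_of_lt (lt_trans one_pos hs)
  set L : ℝ := (eVariationOn γ (Set.Icc 0 1)).toReal with hLdef
  -- finiteness of total variation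
  have hbv : eVariationOn γ (Set.Icc 0 1) ≠ ⊤ := by
    have h := hlip.locallyBoundedVariationOn 0 1 ⟨le_rfl, zero_le_one⟩ ⟨zero_le_one, le_rfl⟩
    simpa [BoundedVariationOn, Set.inter_self] using h
  have hfin : ∀ t u : ℝ, Set.Icc t u ⊆ Set.Icc 0 1 → eVariationOn γ (Set.Icc t u) ≠ ⊤ :=
    fun t u h => ne_top_of_le_ne_top hbv (eVariationOn.mono γ h)
  -- the arclength function
  set v : ℝ → ℝ := fun t => (eVariationOn γ (Set.Icc 0 t)).toReal with hvdef
  have hsub : ∀ t : ℝ, t ∈ Set.Icc (0:ℝ) 1 → Set.Icc (0:ℝ) t ⊆ Set.Icc (0:ℝ) 1 :=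
    fun t ht => Set.Icc_subset_Icc le_rfl ht.2
  have hvadd : ∀ t u : ℝ, t ∈ Set.Icc (0:ℝ) 1 → u ∈ Set.Icc (0:ℝ) 1 → t ≤ u →
      eVariationOn γ (Set.Icc 0 t) + eVariationOn γ (Set.Icc t u) = eVariationOn γ (Set.Icc 0 u) := by
    intro t u ht hu htu
    have h := eVariationOn.Icc_add_Icc γ (s := Set.Icc (0:ℝ) 1) ht.1 htu ht
    rw [Set.Icc_inter_Icc, Set.Icc_inter_Icc, Set.Icc_inter_Icc] at h
    simpa [sup_of_le_right ht.1, inf_of_le_right ht.2, inf_of_le_right hu.2] using h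
  have hvmono : ∀ t u : ℝ, t ∈ Set.Icc (0:ℝ) 1 → u ∈ Set.Icc (0:ℝ) 1 → t ≤ u → v t ≤ v u := by
    intro t u ht hu htu
    exact ENNReal.toReal_mono (hfin 0 u (hsub u hu))
      (eVariationOn.mono γ (Set.Icc_subset_Icc le_rfl htu))
  have hv0 : ∀ t : ℝ, 0 ≤ v t := fun t => ENNReal.toReal_nonneg
  have hvL : ∀ t : ℝ, t ∈ Set.Icc (0:ℝ) 1 → v t ≤ L := by
    intro t ht
    exact ENNReal.toReal_mono hbv (eVariationOn.mono γ (hsub t ht))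
  -- distance bound via variation
  have hdist : ∀ t u : ℝ, t ∈ Set.Icc (0:ℝ) 1 → u ∈ Set.Icc (0:ℝ) 1 → t ≤ u →
      dist (γ t) (γ u) ≤ v u - v t := by
    intro t u ht hu htu
    have hIcc : Set.Icc t u ⊆ Set.Icc 0 1 := Set.Icc_subset_Icc ht.1 hu.2
    have h1 : edist (γ t) (γ u) ≤ eVariationOn γ (Set.Icc t u) :=
      eVariationOn.edist_le γ ⟨le_rfl, htu⟩ ⟨htu, le_rfl⟩
    have h2 : dist (γ t) (γ u) ≤ (eVariationOn γ (Set.Icc t u)).toReal := by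
      rw [dist_edist]
      exact ENNReal.toReal_mono (hfin t u hIcc) h1
    have h3 := hvadd t u ht hu htu
    have h4 : v t + (eVariationOn γ (Set.Icc t u)).toReal = v u := by
      have := congrArg ENNReal.toReal h3
      rwa [ENNReal.toReal_add (hfin 0 t (hsub t ht)) (hfin t u hIcc)] at this
    linarith
  -- the number of pieces
  set N : ℕ := ⌊L⌋₊ + 1 with hNdef
  have hLN : L < (N : ℝ) := by
    have := Nat.lt_floor_add_one L
    push_cast [hNdef]
    exact_mod_cast this
  have hNL : (N : ℝ) ≤ L + 1 := by
    have := Nat.floor_le (show (0:ℝ) ≤ L from ENNReal.toReal_nonneg)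
    push_cast [hNdef]
    linarith
  -- the pieces
  set S : ℕ → Set ℝ := fun i => Set.Icc 0 1 ∩ v ⁻¹' Set.Ico (i : ℝ) (i + 1) with hSdef
  set A : ℕ → Set (EuclideanSpace ℝ (Fin 2)) := fun i => γ '' S i with hAdef
  have hSsub : ∀ i, S i ⊆ Set.Icc (0:ℝ) 1 := fun i => Set.inter_subset_left
  have hSmeas : ∀ i, MeasurableSet (S i) := by
    intro i
    have hord : (S i).OrdConnected := by
      constructor
      intro x hx y hy z hz
      have hzI : z ∈ Set.Icc (0:ℝ) 1 :=
        ⟨le_trans hx.1.1 hz.1, le_trans hz.2 hy.1.2⟩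
      refine ⟨hzI, ?_, ?_⟩
      · exact le_trans hx.2.1 (hvmono x z hx.1 hzI hz.1)
      · exact lt_of_le_of_lt (hvmono z y hzI hy.1 hz.2) hy.2.2
    exact hord.measurableSet
  have hAmeas : ∀ i, MeasurableSet (A i) := fun i =>
    (hSmeas i).image_of_continuousOn_injOn
      (hlip.continuousOn.mono (hSsub i)) (hinj.mono (hSsub i))
  have hAsub : ∀ i, A i ⊆ C := by
    intro i
    rw [hC]
    exact Set.image_mono (hSsub i)
  have hAdisj : ∀ i j : ℕ, i ≠ j → Disjoint (A i) (A j) := by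
    intro i j hij
    rw [Set.disjoint_left]
    rintro x ⟨t, ht, rfl⟩ ⟨u, hu, hγ⟩
    have : u = t := hinj (hSsub j hu) (hSsub i ht) hγ
    subst this
    rcases ht with ⟨-, ht1, ht2⟩
    rcases hu with ⟨-, hu1, hu2⟩
    rcases lt_or_gt_of_ne hij with h | h
    · have : (i:ℝ) + 1 ≤ (j:ℝ) := by exact_mod_cast Nat.succ_le_of_lt h
      linarith
    · have : (j:ℝ) + 1 ≤ (i:ℝ) := by exact_mod_cast Nat.succ_le_of_lt h
      linarith
  have hcover : C ⊆ ⋃ i ∈ Finset.range N, A i := by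
    rw [hC]
    rintro x ⟨t, ht, rfl⟩
    have hvt0 : 0 ≤ v t := hv0 t
    have hiN : ⌊v t⌋₊ < N := by
      have h1 : (⌊v t⌋₊ : ℝ) ≤ v t := Nat.floor_le hvt0
      have h2 : v t < (N:ℝ) := lt_of_le_of_lt (hvL t ht) hLN
      exact_mod_cast lt_of_le_of_lt h1 h2
    refine Set.mem_biUnion (Finset.mem_range.2 hiN) ?_
    exact ⟨t, ⟨ht, Nat.floor_le hvt0, Nat.lt_floor_add_one _⟩, rfl⟩
  -- on each piece, the kernel equals 1
  have hkernel : ∀ i, ∀ x ∈ A i, ∀ y ∈ A i, 1 / max (dist x y ^ s) 1 = 1 := by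
    rintro i x ⟨t, ht, rfl⟩ y ⟨u, hu, rfl⟩
    have hd : dist (γ t) (γ u) ≤ 1 := by
      rcases le_total t u with htu | htu
      · have := hdist t u ht.1 hu.1 htu
        rcases ht with ⟨-, h1, h2⟩; rcases hu with ⟨-, h3, h4⟩
        linarith
      · have := hdist u t hu.1 ht.1 htu
        rw [dist_comm]
        rcases ht with ⟨-, h1, h2⟩; rcases hu with ⟨-, h3, h4⟩
        linarith
    have : dist (γ t) (γ u) ^ s ≤ 1 := Real.rpow_le_one dist_nonneg hd hs0
    rw [max_eq_right this, div_one]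
  -- measure-theoretic setup
  set f : EuclideanSpace ℝ (Fin 2) → EuclideanSpace ℝ (Fin 2) → ℝ :=
    fun x y => 1 / max (dist x y ^ s) 1 with hfdef
  have hfnn : ∀ x y, 0 ≤ f x y := by
    intro x y
    apply div_nonneg zero_le_one
    exact le_trans zero_le_one (le_max_right _ _)
  have hfle : ∀ x y, f x y ≤ 1 := by
    intro x y
    rw [div_le_one (lt_of_lt_of_le one_pos (le_max_right _ _))]
    exact le_max_right _ _
  have hfc : Continuous (Function.uncurry f) := by
    apply Continuous.div continuous_const
      ((continuous_dist.rpow_const (fun p => Or.inr hs0)).max continuous_const)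
    exact fun p => ne_of_gt (lt_of_lt_of_le one_pos (le_max_right _ _))
  have hfm : Measurable (Function.uncurry f) := hfc.measurable
  have hfmx : ∀ x, Measurable (f x) := by
    intro x
    apply Measurable.div measurable_const
    apply Measurable.max _ measurable_const
    apply Continuous.measurable
    exact (continuous_const.dist continuous_id).rpow_const (fun p => Or.inr hs0)
  set ν : Measure (EuclideanSpace ℝ (Fin 2)) := μ₀.restrict C with hνdef
  have hνfin : IsFiniteMeasure ν := by
    constructor
    rw [hνdef, Measure.restrict_apply_univ, hsupp]
    exact ENNReal.one_lt_top
  have hfi : ∀ x, Integrable (f x) ν := by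
    intro x
    refine Integrable.mono' (integrable_const 1) (hfmx x).aestronglyMeasurable ?_
    filter_upwards with y
    rw [Real.norm_eq_abs, abs_of_nonneg (hfnn x y)]
    exact hfle x y
  set g : EuclideanSpace ℝ (Fin 2) → ℝ := fun x => ∫ y, f x y ∂ν with hgdef
  have hgm : StronglyMeasurable g := by
    exact hfm.stronglyMeasurable.integral_prod_right'
  have hgnn : ∀ x, 0 ≤ g x := fun x => integral_nonneg (fun y => hfnn x y)
  have hgle : ∀ x, g x ≤ 1 := by
    intro x
    calc g x ≤ ∫ _, (1:ℝ) ∂ν := integral_mono (hfi x) (integrable_const 1) (hfle x)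
    _ = (ν Set.univ).toReal := by simp; rfl
    _ ≤ 1 := by
      rw [hνdef, Measure.restrict_apply_univ, hsupp]
      simp
  have hgi : Integrable g ν := by
    refine Integrable.mono' (integrable_const 1) hgm.aestronglyMeasurable ?_
    filter_upwards with x
    rw [Real.norm_eq_abs, abs_of_nonneg (hgnn x)]
    exact hgle x
  set a : ℕ → ℝ := fun i => (μ₀ (A i)).toReal with hadef
  have hann : ∀ i, 0 ≤ a i := fun i => ENNReal.toReal_nonneg
  have hμAfin : ∀ i, μ₀ (A i) ≠ ⊤ := fun i => measure_ne_top μ₀ (A i)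
  have hνA : ∀ i, ν (A i) = μ₀ (A i) := by
    intro i
    rw [hνdef, Measure.restrict_apply (hAmeas i), Set.inter_eq_self_of_subset_left (hAsub i)]
  -- lower bound for g on each piece
  have hglb : ∀ i, ∀ x ∈ A i, a i ≤ g x := by
    intro i x hx
    have h1 : ∫ y in A i, f x y ∂ν = a i := by
      rw [show ∫ y in A i, f x y ∂ν = ∫ y in A i, (1:ℝ) ∂ν from
        setIntegral_congr_fun (hAmeas i) (fun y hy => hkernel i x hx y hy)]
      rw [setIntegral_const, Measure.real, Measure.restrict_apply (hAmeas i),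
        Set.inter_eq_self_of_subset_left (hAsub i), smul_eq_mul, mul_one]
    have h2 : ∫ y in A i, f x y ∂ν ≤ ∫ y, f x y ∂ν := by
      have := setIntegral_mono_set (μ := ν) (s := A i) (t := Set.univ)
        ((hfi x).integrableOn) (Filter.Eventually.of_forall (fun y => hfnn x y))
        (HasSubset.Subset.eventuallyLE (Set.subset_univ (A i)))
      simpa using this
    rw [hgdef]
    linarith
  -- the simple lower bound function
  set h : EuclideanSpace ℝ (Fin 2) → ℝ :=
    fun x => ∑ i ∈ Finset.range N, Set.indicator (A i) (fun _ => a i) x with hhdef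
  have hhle : ∀ x ∈ C, h x ≤ g x := by
    intro x hx
    rcases Set.mem_iUnion₂.1 (hcover hx) with ⟨i₀, hi₀, hxi₀⟩
    have hsum : h x = a i₀ := by
      show ∑ i ∈ Finset.range N, Set.indicator (A i) (fun _ => a i) x = a i₀
      rw [Finset.sum_eq_single_of_mem i₀ hi₀]
      · exact Set.indicator_of_mem hxi₀ _
      · intro j _ hj
        apply Set.indicator_of_notMem
        exact fun hxj => (Set.disjoint_left.1 (hAdisj i₀ j (Ne.symm hj))) hxi₀ hxj
    rw [hsum]
    exact hglb i₀ x hxi₀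
  have hhint : ∀ i, Integrable (Set.indicator (A i) (fun _ => a i)) ν :=
    fun i => (integrable_const (a i)).indicator (hAmeas i)
  have hhintsum : Integrable h ν := integrable_finset_sum _ (fun i _ => hhint i)
  have hhI : ∫ x, h x ∂ν = ∑ i ∈ Finset.range N, a i ^ 2 := by
    rw [hhdef, integral_finset_sum _ (fun i _ => hhint i)]
    refine Finset.sum_congr rfl (fun i _ => ?_)
    rw [integral_indicator_const _ (hAmeas i), Measure.real, hνA i, smul_eq_mul, sq]
  -- ∫ g ≥ ∑ aᵢ²
  have hImeas : MeasurableSet C := by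
    rw [hC]
    exact ((isCompact_Icc.image_of_continuousOn hlip.continuousOn)).measurableSet
  have hIlb : ∑ i ∈ Finset.range N, a i ^ 2 ≤ ∫ x, g x ∂ν := by
    rw [← hhI]
    have h1 : ∫ x, h x ∂ν = ∫ x in C, h x ∂ν := by
      rw [hνdef]
      rw [Measure.restrict_restrict hImeas, Set.inter_self]
    have h2 : ∫ x, g x ∂ν = ∫ x in C, g x ∂ν := by
      rw [hνdef]
      rw [Measure.restrict_restrict hImeas, Set.inter_self]
    rw [h1, h2]
    exact setIntegral_mono_on hhintsum.integrableOn hgi.integrableOn hImeas hhle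
  -- ∑ aᵢ = 1
  have hasum : ∑ i ∈ Finset.range N, a i = 1 := by
    have hU : μ₀ (⋃ i ∈ Finset.range N, A i) = ∑ i ∈ Finset.range N, μ₀ (A i) := by
      apply measure_biUnion_finset
      · intro i _ j _ hij
        exact hAdisj i j hij
      · exact fun i _ => hAmeas i
    have hUC : μ₀ (⋃ i ∈ Finset.range N, A i) = 1 := by
      apply le_antisymm
      · calc μ₀ (⋃ i ∈ Finset.range N, A i) ≤ μ₀ C :=
            measure_mono (Set.iUnion₂_subset (fun i _ => hAsub i))
        _ = 1 := hsupp
      · rw [← hsupp]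
        exact measure_mono hcover
    have : (∑ i ∈ Finset.range N, μ₀ (A i)).toReal = 1 := by
      rw [← hU, hUC]; simp
    rw [← this, ENNReal.toReal_sum (fun i _ => hμAfin i)]
  -- Cauchy-Schwarz
  have hCS : (1:ℝ) ≤ (N : ℝ) * ∑ i ∈ Finset.range N, a i ^ 2 := by
    have := sq_sum_le_card_mul_sum_sq (s := Finset.range N) (f := a)
    rw [hasum, Finset.card_range] at this
    simpa using this
  -- combine
  set I : ℝ := ∫ x in C, ∫ y in C, 1 / max (dist x y ^ s) 1 ∂μ₀ ∂μ₀ with hIdef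
  have hIg : I = ∫ x, g x ∂ν := rfl
  have hIN : (1:ℝ) ≤ (N:ℝ) * I := by
    rw [hIg]
    calc (1:ℝ) ≤ (N : ℝ) * ∑ i ∈ Finset.range N, a i ^ 2 := hCS
    _ ≤ (N:ℝ) * ∫ x, g x ∂ν := by
        apply mul_le_mul_of_nonneg_left hIlb (Nat.cast_nonneg N)
  have hlams : (0:ℝ) < lam ^ s := Real.rpow_pos_of_pos (lt_of_lt_of_le one_pos hlam) s
  have hmain : lam ^ s ≤ (N:ℝ) * K := by
    calc lam ^ s = lam ^ s * 1 := by ring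
    _ ≤ lam ^ s * ((N:ℝ) * I) := by
        apply mul_le_mul_of_nonneg_left hIN (le_of_lt hlams)
    _ = (N:ℝ) * (lam ^ s * I) := by ring
    _ ≤ (N:ℝ) * K := by
        apply mul_le_mul_of_nonneg_left hE (Nat.cast_nonneg N)
  have hdivN : lam ^ s / K ≤ (N:ℝ) := by
    rw [div_le_iff₀ hK]
    calc lam ^ s ≤ (N:ℝ) * K := hmain
    _ = (N:ℝ) * K := rfl
  have h2s : (1:ℝ) ≤ 2 ^ s := Real.one_le_rpow one_le_two hs0
  linarith
end
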